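/- arXiv:1909.02496 — 2 statements merged into one kernel-verified Lean document; each statement's English description precedes it below -/
import Mathlib

section
/- Let π be a permutation of [n] and let I = {j : π(j) ≠ j} have cardinality h ≥ 3. Then I can be partitioned into three sets I_1, I_2, I_3 such that |I_i| ≥ ⌊h/3⌋ for each i, and for every j ∈ I, the indices j and π(j) never lie in the same set I_i. -/
/-!
Colour `σ.support` by `ZMod 3` so that `x` and `σ x` always get different colours and any two
colour classes differ in size by at most one; then every class has at least `⌊h/3⌋` elements.
A single cycle is coloured by position mod 3, and colourings of disjoint permutations combine
once the colours of one of them are shifted cyclically: for two balanced count vectors on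
`ZMod 3`, some cyclic shift of the second makes the sum balanced.
-/

open Finset

lemma ZMod.eq_zero_or_eq_one_or_eq_two (i : ZMod 3) : i = 0 ∨ i = 1 ∨ i = 2 := by
  revert i
  decide

def IsBalanced (a : ZMod 3 → ℕ) : Prop := ∀ i j, a i ≤ a j + 1

lemma isBalanced_iff {a : ZMod 3 → ℕ} :
    IsBalanced a ↔ a 0 ≤ a 1 + 1 ∧ a 0 ≤ a 2 + 1 ∧ a 1 ≤ a 0 + 1 ∧ a 1 ≤ a 2 + 1 ∧
      a 2 ≤ a 0 + 1 ∧ a 2 ≤ a 1 + 1 := by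
  refine ⟨fun h => ⟨h 0 1, h 0 2, h 1 0, h 1 2, h 2 0, h 2 1⟩, fun h i j => ?_⟩
  obtain rfl | rfl | rfl := ZMod.eq_zero_or_eq_one_or_eq_two i <;>
    obtain rfl | rfl | rfl := ZMod.eq_zero_or_eq_one_or_eq_two j <;> omega

lemma IsBalanced.exists_add_shift {a b : ZMod 3 → ℕ} (ha : IsBalanced a) (hb : IsBalanced b) :
    ∃ r : ZMod 3, IsBalanced fun i => a i + b (i - r) := by
  rw [isBalanced_iff] at ha hb
  have : (IsBalanced fun i => a i + b (i - 0)) ∨ (IsBalanced fun i => a i + b (i - 1)) ∨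
      IsBalanced fun i => a i + b (i - 2) := by
    simp only [isBalanced_iff]
    reduce_mod_char
    omega
  rcases this with h | h | h <;> exact ⟨_, h⟩

lemma IsBalanced.sum_div_three_le {a : ZMod 3 → ℕ} (ha : IsBalanced a) (i : ZMod 3) :
    (∑ j, a j) / 3 ≤ a i := by
  have hsum : ∑ j, a j = a 0 + a 1 + a 2 := Fin.sum_univ_three a
  rw [isBalanced_iff] at ha
  rw [hsum]
  obtain rfl | rfl | rfl := ZMod.eq_zero_or_eq_one_or_eq_two i <;> omega

/-- The colour of position `k` on a cycle of length `m`: `k mod 3`, except that when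
`m ≡ 1 [MOD 3]` the last position `m - 1` gets colour `1`, as its neighbours `m - 2` and `0`
have colours `2` and `0`. -/
def cycleColor (m k : ℕ) : ZMod 3 := if m % 3 = 1 ∧ k + 1 = m then 1 else k

lemma cycleColor_succ_ne {m k : ℕ} (hm : 2 ≤ m) (hk : k < m) :
    cycleColor m ((k + 1) % m) ≠ cycleColor m k := by
  have hsucc : (k + 1) % m = if k + 1 = m then 0 else k + 1 := by
    split_ifs with h
    · rw [h, Nat.mod_self]
    · exact Nat.mod_eq_of_lt (by omega)
  intro h
  apply_fun ZMod.val at h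
  rw [hsucc] at h
  unfold cycleColor at h
  split_ifs at h <;> simp only [ZMod.val_natCast, ZMod.val_one] at h <;> omega

lemma ZMod.natCast_eq_iff_mod_eq_val {n : ℕ} [NeZero n] {k : ℕ} {i : ZMod n} :
    (k : ZMod n) = i ↔ k % n = i.val := by
  rw [← ZMod.natCast_zmod_val i, ZMod.natCast_eq_natCast_iff', ZMod.natCast_zmod_val,
    Nat.mod_eq_of_lt (ZMod.val_lt i)]

lemma card_filter_range_natCast_eq (m : ℕ) (i : ZMod 3) :
    #{k ∈ range m | ((k : ℕ) : ZMod 3) = i} = (m + 2 - i.val) / 3 := by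
  have hi := ZMod.val_lt i
  induction m with
  | zero => rw [range_zero, filter_empty, card_empty]; omega
  | succ m ih =>
    rw [range_add_one, filter_insert]
    split_ifs with h <;> rw [ZMod.natCast_eq_iff_mod_eq_val] at h
    · rw [card_insert_of_notMem fun hm => notMem_range_self (mem_of_mem_filter _ hm), ih]
      omega
    · rw [ih]
      omega

lemma isBalanced_card_cycleColor (m : ℕ) :
    IsBalanced fun i => #{k ∈ range m | cycleColor m k = i} := by
  by_cases hm : m % 3 = 1
  · obtain ⟨l, rfl⟩ : ∃ l, m = l + 1 := ⟨m - 1, by omega⟩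
    have hfib : ∀ i, #{k ∈ range l | cycleColor (l + 1) k = i} = (l + 2 - i.val) / 3 := by
      intro i
      rw [← card_filter_range_natCast_eq]
      congr 1
      refine filter_congr fun k hk => ?_
      rw [mem_range] at hk
      rw [cycleColor, if_neg (by omega)]
    have hlast : cycleColor (l + 1) l = 1 := if_pos ⟨hm, rfl⟩
    have h12 : (1 : ZMod 3) ≠ 2 := by decide
    have hval2 : (2 : ZMod 3).val = 2 := rfl
    simp only [isBalanced_iff, range_add_one, filter_insert, hlast, if_neg one_ne_zero, if_true,
      if_neg h12, card_insert_of_notMem fun h => notMem_range_self (mem_of_mem_filter _ h), hfib,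
      ZMod.val_zero, ZMod.val_one, hval2]
    omega
  · simp only [cycleColor, hm, false_and, if_false]
    intro i j
    simp only [card_filter_range_natCast_eq]
    have := ZMod.val_lt i
    have := ZMod.val_lt j
    omega

variable {α : Type*} [Fintype α] [DecidableEq α]

namespace Equiv.Perm

def IsBalancedColoring (σ : Perm α) (c : α → ZMod 3) : Prop :=
  (∀ x ∈ σ.support, c (σ x) ≠ c x) ∧ IsBalanced fun i => #{x ∈ σ.support | c x = i}

theorem IsCycle.exists_isBalancedColoring {σ : Perm α} (hσ : σ.IsCycle) :
    ∃ c, σ.IsBalancedColoring c := by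
  obtain ⟨x, hx, -⟩ := id hσ
  set m := #σ.support
  have hm : 2 ≤ m := hσ.two_le_card_support
  have hord : orderOf σ = m := hσ.orderOf
  set f : ℕ → α := fun k => (σ ^ k) x
  have hinj : Set.InjOn f (range m) := fun a ha b hb hab =>
    pow_injOn_Iio_orderOf (by simpa [hord] using ha) (by simpa [hord] using hb)
      (hσ.pow_eq_pow_iff.2 ⟨x, hx, hab⟩)
  have himage : (range m).image f = σ.support := by
    refine eq_of_subset_of_card_le (image_subset_iff.2 fun k _ => ?_) ?_
    · exact pow_apply_mem_support.2 (mem_support.2 hx)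
    · rw [card_image_of_injOn hinj, card_range]
  have hstep : ∀ k, σ (f k) = f ((k + 1) % m) := fun k => by
    simp only [f, ← hord, pow_mod_orderOf, pow_succ', mul_apply]
  set c : α → ZMod 3 := fun y => cycleColor m (Function.invFunOn f (range m) y)
  have hc : ∀ k ∈ range m, c (f k) = cycleColor m k := fun k hk => by
    simp only [c, hinj.leftInvOn_invFunOn (mem_coe.2 hk)]
  refine ⟨c, ?_, fun i j => ?_⟩
  · rw [← himage, forall_mem_image]
    intro k hk
    rw [hstep, hc _ (mem_range.2 (Nat.mod_lt _ (by omega))), hc k hk]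
    exact cycleColor_succ_ne hm (mem_range.1 hk)
  · have hfib : ∀ i, #{y ∈ σ.support | c y = i} = #{k ∈ range m | cycleColor m k = i} := by
      intro i
      rw [← himage, filter_image, card_image_of_injOn (hinj.mono (filter_subset _ _))]
      exact congrArg card (filter_congr fun k hk => by rw [hc k hk])
    dsimp only
    rw [hfib, hfib]
    exact isBalanced_card_cycleColor m i j

theorem Disjoint.exists_isBalancedColoring_mul {σ τ : Perm α} (hστ : σ.Disjoint τ)
    {c d : α → ZMod 3} (hc : σ.IsBalancedColoring c) (hd : τ.IsBalancedColoring d) :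
    ∃ e, (σ * τ).IsBalancedColoring e := by
  obtain ⟨r, hr⟩ := hc.2.exists_add_shift hd.2
  have hτσ : ∀ x ∈ τ.support, x ∉ σ.support := fun x hx hx' =>
    disjoint_left.1 hστ.disjoint_support hx' hx
  refine ⟨fun x => if x ∈ σ.support then c x else d x + r, ?_, fun i j => ?_⟩
  · rw [hστ.support_mul]
    intro x hx
    dsimp only
    rcases mem_union.1 hx with hxσ | hxτ
    · have hxτ : τ x = x := notMem_support.1 (disjoint_left.1 hστ.disjoint_support hxσ)
      rw [mul_apply, hxτ, if_pos (apply_mem_support.2 hxσ), if_pos hxσ]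
      exact hc.1 x hxσ
    · have hτx := apply_mem_support.2 hxτ
      rw [mul_apply, notMem_support.1 (hτσ _ hτx), if_neg (hτσ _ hτx), if_neg (hτσ x hxτ)]
      exact (add_left_injective r).ne (hd.1 x hxτ)
  · have hfib : ∀ i, #{x ∈ (σ * τ).support | (if x ∈ σ.support then c x else d x + r) = i} =
        #{x ∈ σ.support | c x = i} + #{x ∈ τ.support | d x = i - r} := by
      intro i
      rw [hστ.support_mul, filter_union,
        card_union_of_disjoint (disjoint_filter_filter hστ.disjoint_support)]
      congr 2
      · exact filter_congr fun x hx => by rw [if_pos hx]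
      · exact filter_congr fun x hx => by rw [if_neg (hτσ x hx), eq_sub_iff_add_eq]
    dsimp only
    rw [hfib, hfib]
    exact hr i j

theorem exists_isBalancedColoring (σ : Perm α) : ∃ c, σ.IsBalancedColoring c := by
  induction σ using cycle_induction_on with
  | base_one => exact ⟨0, by simp [IsBalancedColoring, IsBalanced]⟩
  | base_cycles σ hσ => exact hσ.exists_isBalancedColoring
  | induction_disjoint σ τ hστ _ hσ hτ =>
    obtain ⟨c, hc⟩ := hσ
    obtain ⟨d, hd⟩ := hτ
    exact hστ.exists_isBalancedColoring_mul hc hd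

theorem IsBalancedColoring.card_support_div_three_le {σ : Perm α} {c : α → ZMod 3}
    (hc : σ.IsBalancedColoring c) (i : ZMod 3) : #σ.support / 3 ≤ #{x ∈ σ.support | c x = i} := by
  rw [card_eq_sum_card_fiberwise (f := c) (t := univ) fun _ _ => mem_univ _]
  exact hc.2.sum_div_three_le i

end Equiv.Perm

theorem stmt9_general (n : ℕ) (π : Equiv.Perm (Fin n))
    (I : Finset (Fin n)) (hI : I = Finset.univ.filter fun j => π j ≠ j)
    (h : ℕ) (hh : h = I.card) :
    ∃ I1 I2 I3 : Finset (Fin n),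
      Disjoint I1 I2 ∧ Disjoint I1 I3 ∧ Disjoint I2 I3 ∧
      I1 ∪ I2 ∪ I3 = I ∧
      h / 3 ≤ I1.card ∧ h / 3 ≤ I2.card ∧ h / 3 ≤ I3.card ∧
      ∀ j ∈ I, ¬(j ∈ I1 ∧ π j ∈ I1) ∧ ¬(j ∈ I2 ∧ π j ∈ I2) ∧ ¬(j ∈ I3 ∧ π j ∈ I3) := by
  obtain rfl : I = π.support := hI
  obtain rfl := hh
  obtain ⟨c, hc⟩ := π.exists_isBalancedColoring
  have hdisj : ∀ i j : ZMod 3, i ≠ j →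
      Disjoint {x ∈ π.support | c x = i} {x ∈ π.support | c x = j} :=
    fun i j hij => disjoint_filter.2 fun x _ hi hj => hij (hi ▸ hj)
  refine ⟨{x ∈ π.support | c x = 0}, {x ∈ π.support | c x = 1}, {x ∈ π.support | c x = 2},
    hdisj _ _ (by decide), hdisj _ _ (by decide), hdisj _ _ (by decide), ?_,
    hc.card_support_div_three_le 0, hc.card_support_div_three_le 1, hc.card_support_div_three_le 2,
    fun j hj => ?_⟩
  · ext x
    simp only [mem_union, mem_filter]
    have := ZMod.eq_zero_or_eq_one_or_eq_two (c x)
    tauto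
  · have := hc.1 j hj
    simp only [mem_filter]
    refine ⟨?_, ?_, ?_⟩ <;> rintro ⟨⟨-, hj⟩, -, hπj⟩ <;> exact this (hπj.trans hj.symm)

theorem stmt9 (n : ℕ) (π : Equiv.Perm (Fin n))
    (I : Finset (Fin n)) (hI : I = Finset.univ.filter fun j => π j ≠ j)
    (h : ℕ) (hh : h = I.card) (h3 : 3 ≤ h) :
    ∃ I1 I2 I3 : Finset (Fin n),
      Disjoint I1 I2 ∧ Disjoint I1 I3 ∧ Disjoint I2 I3 ∧
      I1 ∪ I2 ∪ I3 = I ∧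
      h / 3 ≤ I1.card ∧ h / 3 ≤ I2.card ∧ h / 3 ≤ I3.card ∧
      ∀ j ∈ I, ¬(j ∈ I1 ∧ π j ∈ I1) ∧ ¬(j ∈ I2 ∧ π j ∈ I2) ∧ ¬(j ∈ I3 ∧ π j ∈ I3) :=
  stmt9_general n π I hI h hh
end

section
/- For every real z ≥ 323, the inequality (log z)/z − 1 − log((log z)/z) ≥ (log z)/1.9 holds. -/
open Real Finset

lemma aux_exp_upper_1 : Real.exp 0.7222 ≤ 2.058965 := by
  have h := Real.exp_bound' (x := 0.7222) (by norm_num) (by norm_num) (n := 12) (by norm_num)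
  refine h.trans ?_
  norm_num [Finset.sum_range_succ, Nat.factorial]

lemma aux_exp_upper_2 : Real.exp 0.725875 ≤ 2.06675 := by
  have h := Real.exp_bound' (x := 0.725875) (by norm_num) (by norm_num) (n := 12) (by norm_num)
  refine h.trans ?_
  norm_num [Finset.sum_range_succ, Nat.factorial]

lemma aux_exp_upper_3 : Real.exp 0.7295 ≤ 2.07435 := by
  have h := Real.exp_bound' (x := 0.7295) (by norm_num) (by norm_num) (n := 12) (by norm_num)
  refine h.trans ?_
  norm_num [Finset.sum_range_succ, Nat.factorial]

lemma aux_exp_lower : (2.40368 : ℝ) ≤ Real.exp 0.87705 := by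
  have h := Real.sum_le_exp_of_nonneg (x := 0.87705) (by norm_num) 14
  refine le_trans ?_ h
  norm_num [Finset.sum_range_succ, Nat.factorial]

lemma aux_expA : Real.exp 5.7776 ≤ 323 := by
  have h : (5.7776 : ℝ) = (8 : ℕ) * 0.7222 := by norm_num
  rw [h, Real.exp_nat_mul]
  calc Real.exp 0.7222 ^ 8 ≤ 2.058965 ^ 8 :=
        pow_le_pow_left₀ (Real.exp_pos _).le aux_exp_upper_1 8
    _ ≤ 323 := by norm_num

lemma aux_expB : Real.exp 5.807 ≤ 332.9 := by
  have h : (5.807 : ℝ) = (8 : ℕ) * 0.725875 := by norm_num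
  rw [h, Real.exp_nat_mul]
  calc Real.exp 0.725875 ^ 8 ≤ 2.06675 ^ 8 :=
        pow_le_pow_left₀ (Real.exp_pos _).le aux_exp_upper_2 8
    _ ≤ 332.9 := by norm_num

lemma aux_expC : Real.exp 5.836 ≤ 343 := by
  have h : (5.836 : ℝ) = (8 : ℕ) * 0.7295 := by norm_num
  rw [h, Real.exp_nat_mul]
  calc Real.exp 0.7295 ^ 8 ≤ 2.07435 ^ 8 :=
        pow_le_pow_left₀ (Real.exp_pos _).le aux_exp_upper_3 8
    _ ≤ 343 := by norm_num

lemma aux_expL : (5.7776 : ℝ) ≤ Real.exp 1.7541 := by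
  have h : (1.7541 : ℝ) = (2 : ℕ) * 0.87705 := by norm_num
  rw [h, Real.exp_nat_mul]
  calc (5.7776 : ℝ) ≤ 2.40368 ^ 2 := by norm_num
    _ ≤ Real.exp 0.87705 ^ 2 := pow_le_pow_left₀ (by norm_num) aux_exp_lower 2

theorem stmt12 (z : ℝ) (hz : 323 ≤ z) :
    Real.log z / 1.9 ≤ Real.log z / z - 1 - Real.log (Real.log z / z) := by
  have hz0 : (0 : ℝ) < z := lt_of_lt_of_le (by norm_num) hz
  obtain ⟨t, ht⟩ : ∃ t, Real.log z = t := ⟨_, rfl⟩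
  rw [ht]
  have hta : (5.7776 : ℝ) ≤ t := by
    rw [← ht, Real.le_log_iff_exp_le hz0]
    exact aux_expA.trans hz
  have ht0 : (0 : ℝ) < t := lt_of_lt_of_le (by norm_num) hta
  have hzt : Real.exp t = z := by rw [← ht]; exact Real.exp_log hz0
  have hEz : Real.exp (-t) = 1 / z := by rw [Real.exp_neg, hzt, one_div]
  -- log t ≤ 1.7541 + t/5.7776 - 1 via concavity at a = 5.7776
  have hloga : Real.log (5.7776 : ℝ) ≤ 1.7541 := by
    rw [Real.log_le_iff_le_exp (by norm_num)]
    exact aux_expL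
  have hconc : Real.log t ≤ 1.7541 + (t / 5.7776 - 1) := by
    have h1 : Real.log (t / 5.7776) ≤ t / 5.7776 - 1 :=
      Real.log_le_sub_one_of_pos (by positivity)
    have h2 : Real.log (t / 5.7776) = Real.log t - Real.log 5.7776 :=
      Real.log_div ht0.ne' (by norm_num)
    linarith
  -- key : 1.7541 ≤ (9/19 - 1/5.7776) * t + t * exp (-t)
  have key : (1.7541 : ℝ) ≤ (9/19 - 1/5.7776) * t + t * Real.exp (-t) := by
    rcases le_or_gt t 5.807 with h1 | h1
    · -- 5.7776 ≤ t ≤ 5.807 : exp(-t) ≥ exp(-5.807) ≥ 1/332.9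
      have hE : (1 / 332.9 : ℝ) ≤ Real.exp (-t) := by
        have h3 : Real.exp (-t) * Real.exp t = 1 := by
          rw [← Real.exp_add]; simp
        have h4 : Real.exp t ≤ 332.9 := (Real.exp_le_exp.mpr h1).trans aux_expB
        have h5 : (0 : ℝ) < Real.exp t := Real.exp_pos t
        rw [div_le_iff₀ (by norm_num)]
        nlinarith
      nlinarith [mul_nonneg (sub_nonneg.2 hta) (sub_nonneg.2 hE)]
    · rcases le_or_gt t 5.836 with h2 | h2
      · -- 5.807 ≤ t ≤ 5.836 : exp(-t) ≥ 1/343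
        have hE : (1 / 343 : ℝ) ≤ Real.exp (-t) := by
          have h3 : Real.exp (-t) * Real.exp t = 1 := by
            rw [← Real.exp_add]; simp
          have h4 : Real.exp t ≤ 343 := (Real.exp_le_exp.mpr h2).trans aux_expC
          have h5 : (0 : ℝ) < Real.exp t := Real.exp_pos t
          rw [div_le_iff₀ (by norm_num)]
          nlinarith
        nlinarith [mul_nonneg (by linarith : (0:ℝ) ≤ t - 5.807) (sub_nonneg.2 hE)]
      · -- t ≥ 5.836 : linear part suffices
        have hE : (0 : ℝ) ≤ t * Real.exp (-t) :=
          mul_nonneg ht0.le (Real.exp_pos _).le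
        nlinarith
  -- assemble
  have hlogdiv : Real.log (t / z) = Real.log t - t := by
    rw [Real.log_div ht0.ne' hz0.ne', ht]
  rw [hlogdiv]
  have htz : t / z = t * Real.exp (-t) := by
    rw [hEz]; ring
  have hkey2 : Real.log t ≤ 9/19 * t + t * Real.exp (-t) - 1 := by
    norm_num at hconc key ⊢
    linarith
  rw [htz]
  norm_num at hkey2 ⊢
  linarith
end
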